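/- (Theorem 1(ii), odd r) Assume W > 0, 4I > zW, and r = 2k+1 is odd. Then H_i^0 attains its minimum over all ion configurations exactly at the configurations for which there is a sublattice (Λᵉ or Λᵒ) on whose sites n_x = k while on the sites of the complementary sublattice n_x = k+1. If moreover |Λᵉ| = |Λᵒ| = |Λ|/2, the number of such minimizing configurations equals 2·(C(r,k))^{|Λ|}, where C(r,k) = r!/(k!(r−k)!). -/

import Mathlib

open Finset

/-- Occupation number (0 or 1) attached to a Boolean occupancy variable. -/
noncomputable def occ (b : Bool) : ℝ := if b then 1 else 0

/-- Total number of ions at site `x` (as a real number): `n_x = Σ_σ n_{x,σ}`. -/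
noncomputable def nsite {V : Type*} {r : ℕ} (C : V → Fin r → Bool) (x : V) : ℝ :=
  ∑ σ : Fin r, occ (C x σ)

/-- Total number of ions at site `x` (as a natural number). -/
def nnat {V : Type*} {r : ℕ} (C : V → Fin r → Bool) (x : V) : ℕ :=
  ∑ σ : Fin r, (if C x σ then 1 else 0)

/-- The classical Hamiltonian
`H_i^0(C) = 2I Σ_x Σ_{σ'<σ''} (n_{x,σ'} - 1/2)(n_{x,σ''} - 1/2)
          + (W/2) Σ_{⟨x,y⟩} (n_x - r/2)(n_y - r/2)`,
where the sum over edges `⟨x,y⟩` (each edge counted once) is written as half the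
symmetric double sum over ordered adjacent pairs. -/
noncomputable def H0 {V : Type*} [Fintype V] (G : SimpleGraph V) [DecidableRel G.Adj]
    (r : ℕ) (I W : ℝ) (C : V → Fin r → Bool) : ℝ :=
  2 * I * ∑ x : V, ∑ p ∈ Finset.univ.filter (fun p : Fin r × Fin r => p.1 < p.2),
      (occ (C x p.1) - 1 / 2) * (occ (C x p.2) - 1 / 2)
  + W / 2 * ((∑ x : V, ∑ y : V,
      (if G.Adj x y then (nsite C x - r / 2) * (nsite C y - r / 2) else 0)) / 2)

/-! With the spin `m_x = n_x - r/2`, the on-site term is `I Σ_x (m_x² - r/4)`, and on a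
`z`-regular graph `Σ_{⟨x,y⟩} m_x m_y = ½ Σ_{⟨x,y⟩} (m_x + m_y)² - (z/2) Σ_x m_x²`, so
`H = (I - zW/4) Σ_x m_x² + (W/4) Σ_{⟨x,y⟩} (m_x + m_y)² - I r |Λ|/4`.
For `r = 2k+1` every `m_x² ≥ 1/4`, with equality iff `n_x ∈ {k, k+1}`. Since `I - zW/4 > 0`
and `W > 0`, the minimizers are exactly the configurations with all `n_x ∈ {k, k+1}` and
`n_x + n_y = r` along every edge. On a connected bipartite graph the set where `n_x = k` is
then one of the two sublattices, and each site carries `C(r,k) = C(r,k+1)` ion arrangements,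
which gives `2·C(r,k)^{|Λ|}` minimizers. -/

theorem sq_sum_eq_sum_sq_add_two_mul_sum_lt {α R : Type*} [Fintype α] [LinearOrder α]
    [CommSemiring R] (f : α → R) :
    (∑ i, f i) ^ 2 = ∑ i, f i ^ 2 +
      2 * ∑ p ∈ univ.filter (fun p : α × α => p.1 < p.2), f p.1 * f p.2 := by
  have hswap : ∑ p ∈ univ.filter (fun p : α × α => p.2 < p.1), f p.1 * f p.2 =
      ∑ p ∈ univ.filter (fun p : α × α => p.1 < p.2), f p.1 * f p.2 :=
    sum_equiv (Equiv.prodComm α α) (by simp) (by simp [mul_comm])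
  have hdiag :
      ∑ p ∈ univ.filter (fun p : α × α => p.1 = p.2), f p.1 * f p.2 = ∑ i, f i ^ 2 := by
    simp [sum_filter, Fintype.sum_prod_type, sq]
  calc (∑ i, f i) ^ 2 = ∑ p : α × α, f p.1 * f p.2 := by
        rw [sq, Fintype.sum_mul_sum, Fintype.sum_prod_type]
    _ = ∑ p : α × α, ((if p.1 < p.2 then f p.1 * f p.2 else 0) +
          (if p.2 < p.1 then f p.1 * f p.2 else 0) + (if p.1 = p.2 then f p.1 * f p.2 else 0)) := by
        refine sum_congr rfl fun p _ => ?_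
        rcases lt_trichotomy p.1 p.2 with h | h | h
        · simp [h, h.not_gt, h.ne]
        · simp [h]
        · simp [h, h.not_gt, h.ne']
    _ = _ := by
        rw [sum_add_distrib, sum_add_distrib, ← sum_filter, ← sum_filter, ← sum_filter, hswap,
          hdiag]
        ring

section AdjacencySums

variable {V R : Type*} [Fintype V] {G : SimpleGraph V} [DecidableRel G.Adj] {z : ℕ}

theorem sum_sum_ite_adj_left [AddCommMonoid R] (hreg : G.IsRegularOfDegree z) (f : V → R) :
    ∑ x, ∑ y, (if G.Adj x y then f x else 0) = z • ∑ x, f x := by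
  rw [Finset.smul_sum]
  refine sum_congr rfl fun x _ => ?_
  rw [← sum_filter, ← G.neighborFinset_eq_filter, sum_const, G.card_neighborFinset_eq_degree,
    hreg x]

theorem sum_sum_ite_adj_right [AddCommMonoid R] (hreg : G.IsRegularOfDegree z) (f : V → R) :
    ∑ x, ∑ y, (if G.Adj x y then f y else 0) = z • ∑ x, f x := by
  rw [sum_comm, ← sum_sum_ite_adj_left hreg]
  simp only [G.adj_comm]

theorem sum_sum_ite_adj_add_sq [CommSemiring R] (hreg : G.IsRegularOfDegree z) (g : V → R) :
    ∑ x, ∑ y, (if G.Adj x y then (g x + g y) ^ 2 else 0) =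
      2 * z * ∑ x, g x ^ 2 + 2 * ∑ x, ∑ y, (if G.Adj x y then g x * g y else 0) := by
  have hexpand : ∀ x y, (if G.Adj x y then (g x + g y) ^ 2 else 0) =
      (if G.Adj x y then g x ^ 2 else 0) + (if G.Adj x y then g y ^ 2 else 0) +
        2 * (if G.Adj x y then g x * g y else 0) := by
    intro x y
    split_ifs <;> ring
  simp only [hexpand, sum_add_distrib, ← mul_sum, sum_sum_ite_adj_left hreg,
    sum_sum_ite_adj_right hreg, nsmul_eq_mul]
  ring

theorem sum_sum_ite_adj_sq_nonneg [Ring R] [LinearOrder R] [IsStrictOrderedRing R]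
    (h : V → V → R) : 0 ≤ ∑ x, ∑ y, (if G.Adj x y then h x y ^ 2 else 0) :=
  sum_nonneg fun x _ => sum_nonneg fun y _ => by split_ifs <;> positivity

theorem sum_sum_ite_adj_sq_eq_zero_iff [Ring R] [LinearOrder R] [IsStrictOrderedRing R]
    (h : V → V → R) :
    ∑ x, ∑ y, (if G.Adj x y then h x y ^ 2 else 0) = 0 ↔
      ∀ x y, G.Adj x y → h x y = 0 := by
  have hterm : ∀ x y, 0 ≤ (if G.Adj x y then h x y ^ 2 else 0) := fun x y => by
    split_ifs <;> positivity
  rw [sum_eq_zero_iff_of_nonneg fun x _ => sum_nonneg fun y _ => hterm x y]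
  simp only [sum_eq_zero_iff_of_nonneg fun y _ => hterm _ y, mem_univ, true_implies]
  refine forall_congr' fun x => forall_congr' fun y => ?_
  split_ifs with hxy <;> simp [hxy]

end AdjacencySums

theorem SimpleGraph.Preconnected.iff_of_forall_adj {V : Type*} {G : SimpleGraph V}
    (hG : G.Preconnected) {P : V → Prop} (hP : ∀ x y, G.Adj x y → (P x ↔ P y)) (x y : V) :
    P x ↔ P y := by
  obtain ⟨w⟩ := hG x y
  induction w with
  | nil => rfl
  | cons hadj _ ih => exact (hP _ _ hadj).trans ih

theorem SimpleGraph.Preconnected.forall_iff_or_forall_iff_not {V : Type*} {G : SimpleGraph V}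
    (hG : G.Preconnected) {P Q : V → Prop} (hP : ∀ x y, G.Adj x y → (P x ↔ ¬ P y))
    (hQ : ∀ x y, G.Adj x y → (Q x ↔ ¬ Q y)) :
    (∀ x, P x ↔ Q x) ∨ ∀ x, P x ↔ ¬ Q x := by
  have hinv := hG.iff_of_forall_adj (P := fun x => P x ↔ Q x) fun x y hxy => by
    have := hP x y hxy
    have := hQ x y hxy
    tauto
  by_cases h : ∀ x, P x ↔ Q x
  · exact .inl h
  · obtain ⟨x₀, hx₀⟩ := not_forall.mp h
    exact .inr fun x => by
      have := hinv x x₀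
      tauto

theorem occ_sub_half_sq (b : Bool) : (occ b - 1 / 2) ^ 2 = 1 / 4 := by
  cases b <;> norm_num [occ]

section Configuration

variable {V : Type*} {r : ℕ}

theorem nsite_eq_nnat (C : V → Fin r → Bool) (x : V) : nsite C x = nnat C x := by
  simp only [nsite, nnat, occ, Nat.cast_sum, Nat.cast_ite, Nat.cast_one, Nat.cast_zero]

noncomputable def spin (C : V → Fin r → Bool) (x : V) : ℝ := nnat C x - r / 2

theorem nsite_sub_half_eq_spin (C : V → Fin r → Bool) (x : V) :
    nsite C x - r / 2 = spin C x := by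
  rw [nsite_eq_nnat, spin]

theorem sum_filter_lt_occ_sub_half_mul (C : V → Fin r → Bool) (x : V) :
    ∑ p ∈ univ.filter (fun p : Fin r × Fin r => p.1 < p.2),
        (occ (C x p.1) - 1 / 2) * (occ (C x p.2) - 1 / 2) = (spin C x ^ 2 - r / 4) / 2 := by
  have h := sq_sum_eq_sum_sq_add_two_mul_sum_lt fun σ => occ (C x σ) - 1 / 2
  have hsum : ∑ σ, (occ (C x σ) - 1 / 2) = spin C x := by
    rw [← nsite_sub_half_eq_spin, sum_sub_distrib]
    simp [nsite, div_eq_mul_inv]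
  simp only [hsum, occ_sub_half_sq, sum_const, card_univ, Fintype.card_fin, nsmul_eq_mul] at h
  linarith

theorem spin_add_spin_eq_zero_iff (C : V → Fin r → Bool) (x y : V) :
    spin C x + spin C y = 0 ↔ nnat C x + nnat C y = r := by
  rw [spin, spin, ← @Nat.cast_inj ℝ]
  push_cast
  constructor <;> intro h <;> linarith

variable {k : ℕ}

theorem quarter_le_spin_sq (hrk : r = 2 * k + 1) (C : V → Fin r → Bool) (x : V) :
    1 / 4 ≤ spin C x ^ 2 := by
  subst hrk
  rcases Nat.lt_or_ge (nnat C x) (k + 1) with h | h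
  · have : (nnat C x : ℝ) ≤ k := by exact_mod_cast Nat.lt_succ_iff.mp h
    rw [spin]; push_cast; nlinarith
  · have : (k : ℝ) + 1 ≤ nnat C x := by exact_mod_cast h
    rw [spin]; push_cast; nlinarith

theorem spin_sq_eq_quarter_iff (hrk : r = 2 * k + 1) (C : V → Fin r → Bool) (x : V) :
    spin C x ^ 2 = 1 / 4 ↔ nnat C x = k ∨ nnat C x = k + 1 := by
  subst hrk
  have hfactor : spin C x ^ 2 - 1 / 4 = ((nnat C x : ℝ) - k) * ((nnat C x : ℝ) - (k + 1)) := by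
    rw [spin]; push_cast; ring
  rw [← sub_eq_zero, hfactor, mul_eq_zero, sub_eq_zero, sub_eq_zero]
  norm_cast

theorem sum_spin_sq_sub_quarter_nonneg [Fintype V] (hrk : r = 2 * k + 1)
    (C : V → Fin r → Bool) : 0 ≤ ∑ x, (spin C x ^ 2 - 1 / 4) :=
  sum_nonneg fun x _ => sub_nonneg.2 (quarter_le_spin_sq hrk C x)

end Configuration

section Hamiltonian

variable {V : Type*} [Fintype V] {G : SimpleGraph V} [DecidableRel G.Adj] {z r k : ℕ} {I W : ℝ}

theorem H0_eq (hreg : G.IsRegularOfDegree z) (I W : ℝ) (C : V → Fin r → Bool) :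
    H0 G r I W C = (I - z * W / 4) * ∑ x, spin C x ^ 2
      + W / 8 * ∑ x, ∑ y, (if G.Adj x y then (spin C x + spin C y) ^ 2 else 0)
      - I * r * Fintype.card V / 4 := by
  have hbond : ∑ x, ∑ y, (if G.Adj x y then spin C x * spin C y else 0) =
      (∑ x, ∑ y, (if G.Adj x y then (spin C x + spin C y) ^ 2 else 0)) / 2
        - z * ∑ x, spin C x ^ 2 := by
    rw [sum_sum_ite_adj_add_sq hreg]
    ring
  simp only [H0, sum_filter_lt_occ_sub_half_mul, nsite_sub_half_eq_spin, hbond, ← sum_div,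
    sum_sub_distrib, sum_const, card_univ, nsmul_eq_mul]
  ring

noncomputable def groundEnergy (V : Type*) [Fintype V] (z r : ℕ) (I W : ℝ) : ℝ :=
  (I - z * W / 4) * Fintype.card V / 4 - I * r * Fintype.card V / 4

def IsGroundConfig (G : SimpleGraph V) (k : ℕ) (C : V → Fin r → Bool) : Prop :=
  (∀ x, nnat C x = k ∨ nnat C x = k + 1) ∧ ∀ x y, G.Adj x y → nnat C x + nnat C y = r

theorem H0_sub_groundEnergy (hreg : G.IsRegularOfDegree z) (I W : ℝ) (C : V → Fin r → Bool) :
    H0 G r I W C - groundEnergy V z r I W = (I - z * W / 4) * ∑ x, (spin C x ^ 2 - 1 / 4)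
      + W / 8 * ∑ x, ∑ y, (if G.Adj x y then (spin C x + spin C y) ^ 2 else 0) := by
  rw [H0_eq hreg, groundEnergy, sum_sub_distrib, sum_const, card_univ, nsmul_eq_mul]
  ring

theorem H0_eq_groundEnergy_iff (hreg : G.IsRegularOfDegree z) (hrk : r = 2 * k + 1)
    (hW : 0 < W) (hIW : z * W < 4 * I) (C : V → Fin r → Bool) :
    H0 G r I W C = groundEnergy V z r I W ↔ IsGroundConfig G k C := by
  rw [← sub_eq_zero, H0_sub_groundEnergy hreg,
    add_eq_zero_iff_of_nonneg (mul_nonneg (by linarith) (sum_spin_sq_sub_quarter_nonneg hrk C))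
      (mul_nonneg (by positivity) (sum_sum_ite_adj_sq_nonneg _)),
    mul_eq_zero_iff_left (by linarith), mul_eq_zero_iff_left (by positivity),
    sum_eq_zero_iff_of_nonneg fun x _ => sub_nonneg.2 (quarter_le_spin_sq hrk C x),
    sum_sum_ite_adj_sq_eq_zero_iff]
  simp only [mem_univ, true_implies, sub_eq_zero, spin_sq_eq_quarter_iff hrk,
    spin_add_spin_eq_zero_iff]
  rfl

theorem groundEnergy_le_H0 (hreg : G.IsRegularOfDegree z) (hrk : r = 2 * k + 1)
    (hW : 0 < W) (hIW : z * W < 4 * I) (C : V → Fin r → Bool) :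
    groundEnergy V z r I W ≤ H0 G r I W C := by
  rw [← sub_nonneg, H0_sub_groundEnergy hreg]
  exact add_nonneg (mul_nonneg (by linarith) (sum_spin_sq_sub_quarter_nonneg hrk C))
    (mul_nonneg (by positivity) (sum_sum_ite_adj_sq_nonneg _))

theorem setOf_forall_H0_le_eq (hreg : G.IsRegularOfDegree z) (hrk : r = 2 * k + 1)
    (hW : 0 < W) (hIW : z * W < 4 * I)
    (hground : ∃ C₀ : V → Fin r → Bool, IsGroundConfig G k C₀) :
    {C : V → Fin r → Bool | ∀ C', H0 G r I W C ≤ H0 G r I W C'} =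
      {C | IsGroundConfig G k C} := by
  obtain ⟨C₀, hC₀⟩ := hground
  ext C
  simp only [Set.mem_ofPred_eq, ← H0_eq_groundEnergy_iff hreg hrk hW hIW]
  refine ⟨fun hmin => le_antisymm ?_ (groundEnergy_le_H0 hreg hrk hW hIW C), fun hC C' => ?_⟩
  · exact (hmin C₀).trans ((H0_eq_groundEnergy_iff hreg hrk hW hIW C₀).2 hC₀).le
  · exact hC ▸ groundEnergy_le_H0 hreg hrk hW hIW C'

end Hamiltonian

theorem isGroundConfig_iff {V : Type*} {G : SimpleGraph V} (hG : G.Preconnected)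
    {c : V → Prop} [DecidablePred c] (hc : ∀ x y, G.Adj x y → (c x ↔ ¬ c y)) {r k : ℕ}
    (hrk : r = 2 * k + 1)
    (C : V → Fin r → Bool) :
    IsGroundConfig G k C ↔
      (∀ x, nnat C x = if c x then k else k + 1) ∨
        (∀ x, nnat C x = if c x then k + 1 else k) := by
  constructor
  · rintro ⟨hval, hadj⟩
    have hP : ∀ x y, G.Adj x y → (nnat C x = k ↔ ¬ nnat C y = k) := fun x y hxy => by
      have := hadj x y hxy
      have := hval x
      omega
    rcases hG.forall_iff_or_forall_iff_not hP hc with h | h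
    · refine .inl fun x => ?_
      have := h x
      have := hval x
      split_ifs <;> tauto
    · refine .inr fun x => ?_
      have := h x
      have := hval x
      split_ifs <;> tauto
  · rintro (h | h) <;>
    refine ⟨fun x => by rw [h x]; split_ifs <;> simp, fun x y hxy => ?_⟩ <;>
    have := hc x y hxy <;> rw [h x, h y] <;> split_ifs <;> first | omega | tauto

theorem card_fin_bool_sum_eq (r c : ℕ) :
    Nat.card {f : Fin r → Bool // ∑ σ, (if f σ then 1 else 0) = c} = r.choose c := by
  let e : {f : Fin r → Bool // ∑ σ, (if f σ then 1 else 0) = c} ≃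
      {s : Finset (Fin r) // #s = c} :=
    { toFun := fun f => ⟨univ.filter (f.1 · = true), by rw [card_filter]; exact f.2⟩
      invFun := fun s => ⟨fun σ => decide (σ ∈ s.1), by simpa [← card_filter] using s.2⟩
      left_inv := fun f => by ext σ; simp
      right_inv := fun s => by ext σ; simp }
  rw [Nat.card_congr e, Nat.card_eq_fintype_card, Fintype.card_finset_len, Fintype.card_fin]

theorem card_setOf_forall_nnat_eq {V : Type*} [Fintype V] (r : ℕ) (n : V → ℕ) :
    Nat.card {C : V → Fin r → Bool | ∀ x, nnat C x = n x} = ∏ x, r.choose (n x) := by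
  refine (Nat.card_congr (Equiv.subtypePiEquivPi
    (p := fun x (f : Fin r → Bool) => ∑ σ, (if f σ then 1 else 0) = n x))).trans ?_
  rw [Nat.card_pi]
  exact prod_congr rfl fun x _ => card_fin_bool_sum_eq r (n x)

theorem card_setOf_forall_nnat_eq_choose_pow {V : Type*} [Fintype V] {r k : ℕ}
    (hrk : r = 2 * k + 1) (n : V → ℕ) (hn : ∀ x, n x = k ∨ n x = k + 1) :
    Nat.card {C : V → Fin r → Bool | ∀ x, nnat C x = n x} = r.choose k ^ Fintype.card V := by
  rw [card_setOf_forall_nnat_eq, ← card_univ, ← prod_const]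
  refine prod_congr rfl fun x _ => ?_
  rcases hn x with h | h <;> rw [h]
  rw [hrk, Nat.choose_symm_half]

theorem forall_mem_and_forall_mem_iff_forall_eq_ite {V β : Type*} [DecidableEq V]
    {s t : Finset V} (hcover : ∀ v, v ∈ s ∨ v ∈ t) (hdisj : Disjoint s t) (f : V → β)
    (a b : β) :
    ((∀ x ∈ s, f x = a) ∧ ∀ x ∈ t, f x = b) ↔ ∀ x, f x = if x ∈ s then a else b := by
  refine ⟨fun ⟨ha, hb⟩ x => ?_, fun h => ⟨fun x hx => ?_, fun x hx => ?_⟩⟩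
  · split_ifs with hx
    exacts [ha x hx, hb x ((hcover x).resolve_left hx)]
  · rw [h x, if_pos hx]
  · rw [h x, if_neg (disjoint_right.1 hdisj hx)]

theorem mem_iff_notMem_of_adj {V : Type*} {G : SimpleGraph V} {s t : Finset V}
    (hdisj : Disjoint s t)
    (hbip : ∀ x y, G.Adj x y → (x ∈ s ∧ y ∈ t) ∨ (x ∈ t ∧ y ∈ s))
    (x y : V) (hxy : G.Adj x y) : x ∈ s ↔ y ∉ s := by
  rcases hbip x y hxy with ⟨hx, hy⟩ | ⟨hx, hy⟩
  · exact iff_of_true hx (disjoint_right.1 hdisj hy)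
  · exact iff_of_false (disjoint_right.1 hdisj hx) (not_not.2 hy)

theorem statement7_general
    {V : Type*} [Fintype V]
    (G : SimpleGraph V) [DecidableRel G.Adj]
    (z r : ℕ)
    (hreg : G.IsRegularOfDegree z) (hconn : G.Connected)
    (Λe Λo : Finset V)
    (hcover : ∀ v : V, v ∈ Λe ∨ v ∈ Λo) (hdisj : Disjoint Λe Λo)
    (hbip : ∀ x y : V, G.Adj x y → (x ∈ Λe ∧ y ∈ Λo) ∨ (x ∈ Λo ∧ y ∈ Λe))
    (I W : ℝ) (hW : 0 < W) (hIW : (z : ℝ) * W < 4 * I) (k : ℕ) (hrk : r = 2 * k + 1) :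
    {C : V → Fin r → Bool | ∀ C' : V → Fin r → Bool, H0 G r I W C ≤ H0 G r I W C'} =
      {C : V → Fin r → Bool |
        ((∀ x ∈ Λe, nnat C x = k) ∧ (∀ x ∈ Λo, nnat C x = k + 1)) ∨
        ((∀ x ∈ Λe, nnat C x = k + 1) ∧ (∀ x ∈ Λo, nnat C x = k))} ∧
    (Λe.card = Λo.card →
      Nat.card {C : V → Fin r → Bool |
          ∀ C' : V → Fin r → Bool, H0 G r I W C ≤ H0 G r I W C'} =
        2 * (Nat.choose r k) ^ (Fintype.card V)) := by
  classical
  have hcolor := mem_iff_notMem_of_adj hdisj hbip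
  set A := {C : V → Fin r → Bool | ∀ x, nnat C x = if x ∈ Λe then k else k + 1}
  set B := {C : V → Fin r → Bool | ∀ x, nnat C x = if x ∈ Λe then k + 1 else k}
  have hground : {C | IsGroundConfig G k C} = A ∪ B :=
    Set.ext (isGroundConfig_iff hconn.preconnected hcolor hrk)
  have hcardA : Nat.card A = r.choose k ^ Fintype.card V :=
    card_setOf_forall_nnat_eq_choose_pow hrk _ fun x => by split_ifs <;> simp
  have hcardB : Nat.card B = r.choose k ^ Fintype.card V :=
    card_setOf_forall_nnat_eq_choose_pow hrk _ fun x => by split_ifs <;> simp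
  obtain ⟨C₀, hC₀⟩ : A.Nonempty := by
    have : 0 < Nat.card A := hcardA ▸ pow_pos (Nat.choose_pos (by omega)) _
    exact Set.nonempty_coe_sort.1 (Nat.card_pos_iff.1 this).1
  have hmin := setOf_forall_H0_le_eq hreg hrk hW hIW
    ⟨C₀, (isGroundConfig_iff hconn.preconnected hcolor hrk C₀).2 (.inl hC₀)⟩
  refine ⟨?_, fun _ => ?_⟩
  · rw [hmin, hground]
    ext C
    simp only [Set.mem_union, Set.mem_ofPred_eq,
      forall_mem_and_forall_mem_iff_forall_eq_ite hcover hdisj]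
    rfl
  · obtain ⟨v₀⟩ := hconn.nonempty
    have hAB : Disjoint A B := Set.disjoint_left.2 fun C hA hB => by
      have := hA v₀
      have := hB v₀
      split_ifs at * <;> omega
    rw [hmin, hground, Nat.card_coe_set_eq, Set.ncard_union_eq hAB, ← Nat.card_coe_set_eq,
      ← Nat.card_coe_set_eq, hcardA, hcardB, two_mul]

/-- **Theorem 1(ii), odd `r`.** For `W > 0`, `4I > zW`, `r = 2k+1`, the
minimizers of `H_i^0` are exactly the configurations with `n_x = k` on one sublattice and
`n_x = k+1` on the other; if `|Λᵉ| = |Λᵒ|`, their number is `2·C(r,k)^{|Λ|}`. -/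
theorem statement7
    {V : Type*} [Fintype V] [DecidableEq V]
    (G : SimpleGraph V) [DecidableRel G.Adj]
    (z r : ℕ) (hz : 2 ≤ z) (hr : 2 ≤ r)
    (hreg : G.IsRegularOfDegree z) (hconn : G.Connected)
    (Λe Λo : Finset V)
    (hcover : ∀ v : V, v ∈ Λe ∨ v ∈ Λo) (hdisj : Disjoint Λe Λo)
    (hbip : ∀ x y : V, G.Adj x y → (x ∈ Λe ∧ y ∈ Λo) ∨ (x ∈ Λo ∧ y ∈ Λe))
    (I W : ℝ) (hW : 0 < W) (hIW : (z : ℝ) * W < 4 * I) (k : ℕ) (hrk : r = 2 * k + 1) :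
    {C : V → Fin r → Bool | ∀ C' : V → Fin r → Bool, H0 G r I W C ≤ H0 G r I W C'} =
      {C : V → Fin r → Bool |
        ((∀ x ∈ Λe, nnat C x = k) ∧ (∀ x ∈ Λo, nnat C x = k + 1)) ∨
        ((∀ x ∈ Λe, nnat C x = k + 1) ∧ (∀ x ∈ Λo, nnat C x = k))} ∧
    (Λe.card = Λo.card →
      Nat.card {C : V → Fin r → Bool |
          ∀ C' : V → Fin r → Bool, H0 G r I W C ≤ H0 G r I W C'} =
        2 * (Nat.choose r k) ^ (Fintype.card V)) :=
  statement7_general G z r hreg hconn Λe Λo hcover hdisj hbip I W hW hIW k hrk
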